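/- Let N ≥ 2, 0 < p < 1, 0 < q < p with 1 - 2p + q > 0, and let P be the Dandelion probability function on {0,1}^{N+1} with parameters α = log((p-q)/(1-2p+q)), α₀ = (N-1)·log((1-p)/p) + N·α, β = log(q/(p-q)) - α, Z = (1+exp α)^N + exp(α₀)·(1+exp(α+β))^N. For distinct non-central indices i, j ∈ {1,…,N}, let E[LᵢLⱼ] = Σ_{(l₀,…,l_N): lᵢ=1, lⱼ=1} P(l₀,…,l_N) and define the non-central correlation ρ_{ij} = (E[LᵢLⱼ] - p²)/(p(1-p)) and the central–non-central correlation ρ = (q - p²)/(p(1-p)). Then ρ_{ij} = ρ². -/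

import Mathlib

/-- The real value of a Bernoulli (default) indicator. -/
noncomputable def ind (b : Bool) : ℝ := if b then 1 else 0

/-!
Given the central node `L₀`, the exponent splits into one term per non-central node, so these
nodes are conditionally independent Bernoulli variables with log-odds `α + β L₀`, and the weight
of `{Lᵢ = Lⱼ = 1}` in each branch is the branch's partition function times a squared sigmoid.
For the given parameters the two success probabilities are `(p - q)/(1 - p)` and `q/p`, and
`P(L₀ = 1) = p`. Hence `E[LᵢLⱼ] = (1 - p)((p - q)/(1 - p))² + p(q/p)²`, and
`(E[LᵢLⱼ] - p²) · p(1 - p) = (q - p²)²` is a polynomial identity.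
-/

open Finset Real

theorem sum_prod_ite_of_forall_mem_eq_true {ι R : Type*} [Fintype ι] [DecidableEq ι]
    [CommSemiring R] (s : Finset ι) (t : R) :
    ∑ f ∈ univ.filter (fun f : ι → Bool => ∀ k ∈ s, f k = true),
      ∏ k, (if f k then t else 1) = t ^ #s * (1 + t) ^ (Fintype.card ι - #s) := by
  have hfilter : univ.filter (fun f : ι → Bool => ∀ k ∈ s, f k = true)
      = Fintype.piFinset (fun k => if k ∈ s then {true} else univ) := by
    ext f
    simp only [mem_filter, mem_univ, true_and, Fintype.mem_piFinset]
    refine ⟨fun h k => ?_, fun h k hk => by simpa [hk] using h k⟩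
    split_ifs with hk <;> simp [h k, hk]
  have hfactor (k : ι) : ∑ b ∈ (if k ∈ s then {true} else univ), (if b then t else 1)
      = if k ∈ s then t else 1 + t := by
    split_ifs <;> simp [add_comm]
  rw [hfilter, ← prod_univ_sum (fun k => if k ∈ s then {true} else univ)
    (fun _ b => if b then t else 1), prod_congr rfl fun k _ => hfactor k, prod_ite,
    filter_mem_eq_inter, univ_inter, filter_not, filter_mem_eq_inter, univ_inter,
    ← compl_eq_univ_sdiff, prod_const, prod_const, card_compl]

theorem sum_filter_fin_cons {n : ℕ} {α M : Type*} [Fintype α] [AddCommMonoid M]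
    (P : (Fin (n + 1) → α) → Prop) [DecidablePred P] (F : (Fin (n + 1) → α) → M) :
    ∑ l ∈ univ.filter P, F l
      = ∑ a, ∑ f ∈ univ.filter (fun f => P (Fin.cons a f)), F (Fin.cons a f) := by
  rw [sum_filter, ← Equiv.sum_comp (Fin.consEquiv fun _ => α), Fintype.sum_prod_type]
  simp only [sum_filter]
  rfl

theorem Real.sigmoid_eq_exp_div (x : ℝ) : sigmoid x = exp x / (1 + exp x) := by
  rw [sigmoid_def, exp_neg]
  field_simp
  ring

theorem Real.sigmoid_log_div {u v : ℝ} (hu : 0 < u) (hv : 0 < v) :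
    sigmoid (log (u / v)) = u / (u + v) := by
  rw [sigmoid_eq_exp_div, exp_log (div_pos hu hv)]
  field_simp
  ring

theorem mul_add_mul_div_add_eq_of_odds {x y u v p : ℝ} (hx : x ≠ 0) (h1p : 1 - p ≠ 0)
    (hodds : y * (1 - p) = p * x) :
    (x * u + y * v) / (x + y) = (1 - p) * u + p * v := by
  have hy : y = p * x / (1 - p) := by rw [eq_div_iff h1p, hodds]
  subst hy
  field_simp
  ring

theorem sum_prod_ite_exp_of_both_true {N : ℕ} {i j : Fin N} (hij : i ≠ j) (x : ℝ) :
    ∑ f ∈ univ.filter (fun f : Fin N → Bool => f i = true ∧ f j = true),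
      ∏ k, (if f k then exp x else 1) = (1 + exp x) ^ N * sigmoid x ^ 2 := by
  have hsum := sum_prod_ite_of_forall_mem_eq_true {i, j} (exp x)
  simp only [mem_insert, mem_singleton, forall_eq_or_imp, forall_eq] at hsum
  have hcard : #({i, j} : Finset (Fin N)) = 2 := card_pair hij
  have hN : 2 ≤ N := by simpa [hcard] using card_le_univ ({i, j} : Finset (Fin N))
  obtain ⟨m, rfl⟩ := Nat.exists_eq_add_of_le' hN
  rw [hsum, hcard, Fintype.card_fin, Nat.add_sub_cancel, sigmoid_eq_exp_div]
  field_simp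
  ring

theorem exp_dandelion_energy {ι : Type*} [Fintype ι] (α₀ α β : ℝ) (b : Bool)
    (f : ι → Bool) :
    exp (α₀ * ind b + α * (∑ k, ind (f k)) + β * ind b * (∑ k, ind (f k)))
      = exp (α₀ * ind b) * ∏ k, (if f k then exp (α + β * ind b) else 1) := by
  have hlin : α₀ * ind b + α * (∑ k, ind (f k)) + β * ind b * (∑ k, ind (f k))
      = α₀ * ind b + ∑ k, (α + β * ind b) * ind (f k) := by
    rw [← mul_sum]; ring
  rw [hlin, exp_add, exp_sum]
  congr 1
  refine prod_congr rfl fun k _ => ?_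
  cases f k <;> simp [ind]

theorem sum_dandelion_weight_both_true {N : ℕ} {i j : Fin N} (hij : i ≠ j) (α₀ α β : ℝ) :
    ∑ l ∈ univ.filter (fun l : Fin (N + 1) → Bool => l i.succ = true ∧ l j.succ = true),
        exp (α₀ * ind (l 0) + α * (∑ k : Fin N, ind (l k.succ))
          + β * ind (l 0) * (∑ k : Fin N, ind (l k.succ)))
      = (1 + exp α) ^ N * sigmoid α ^ 2
          + exp α₀ * (1 + exp (α + β)) ^ N * sigmoid (α + β) ^ 2 := by
  rw [sum_filter_fin_cons]
  simp only [Fin.cons_zero, Fin.cons_succ, exp_dandelion_energy, ← mul_sum,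
    sum_prod_ite_exp_of_both_true hij, Fintype.sum_bool]
  simp [ind, mul_assoc, add_comm]

theorem dandelion_central_odds (N : ℕ) {p q α α₀ β : ℝ} (hq0 : 0 < q) (hqp : q < p)
    (hpos : 0 < 1 - 2 * p + q)
    (hα : α = log ((p - q) / (1 - 2 * p + q)))
    (hα₀ : α₀ = (N - 1 : ℝ) * log ((1 - p) / p) + N * α)
    (hβ : β = log (q / (p - q)) - α) :
    exp α₀ * (1 + exp (α + β)) ^ N * (1 - p) = p * (1 + exp α) ^ N := by
  have hp : 0 < p := hq0.trans hqp
  have hpq : 0 < p - q := sub_pos.2 hqp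
  have h1p : 0 < 1 - p := by linarith
  have ha : exp α = (p - q) / (1 - 2 * p + q) := by rw [hα, exp_log (div_pos hpq hpos)]
  have hb : exp (α + β) = q / (p - q) := by
    rw [hβ, add_sub_cancel, exp_log (div_pos hq0 hpq)]
  have hc : exp α₀ = p / (1 - p) * ((1 - p) / p) ^ N * exp α ^ N := by
    have hlog : (N - 1 : ℝ) * log ((1 - p) / p) = N * log ((1 - p) / p) - log ((1 - p) / p) := by
      ring
    rw [hα₀, exp_add, hlog, exp_sub, exp_nat_mul, exp_nat_mul, exp_log (div_pos h1p hp)]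
    field_simp
  have h1a : 1 + exp α = (1 - p) / (1 - 2 * p + q) := by
    rw [ha, one_add_div hpos.ne']; congr 1; ring
  have h1b : 1 + exp (α + β) = p / (p - q) := by
    rw [hb, one_add_div hpq.ne']; congr 1; ring
  rw [hc, h1a, h1b, ha, div_pow, div_pow, div_pow, div_pow]
  field_simp

theorem sigmoid_dandelion_alpha {p q α : ℝ} (hqp : q < p) (hpos : 0 < 1 - 2 * p + q)
    (hα : α = log ((p - q) / (1 - 2 * p + q))) :
    sigmoid α = (p - q) / (1 - p) := by
  rw [hα, sigmoid_log_div (sub_pos.2 hqp) hpos]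
  congr 1
  ring

theorem sigmoid_dandelion_alpha_add_beta {p q α β : ℝ} (hq0 : 0 < q) (hqp : q < p)
    (hβ : β = log (q / (p - q)) - α) :
    sigmoid (α + β) = q / p := by
  rw [hβ, add_sub_cancel, sigmoid_log_div hq0 (sub_pos.2 hqp), add_sub_cancel]

theorem dandelion_noncentral_correlation_sq_general (N : ℕ) (p q : ℝ)
    (hq0 : 0 < q) (hqp : q < p)
    (hpos : 1 - 2 * p + q > 0)
    (α α₀ β Z : ℝ)
    (hα : α = Real.log ((p - q) / (1 - 2 * p + q)))
    (hα₀ : α₀ = (N - 1 : ℝ) * Real.log ((1 - p) / p) + N * α)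
    (hβ : β = Real.log (q / (p - q)) - α)
    (hZ : Z = (1 + Real.exp α) ^ N + Real.exp α₀ * (1 + Real.exp (α + β)) ^ N)
    (i j : Fin N) (hij : i ≠ j)
    (ELiLj ρij ρ : ℝ)
    (hE : ELiLj = ∑ l ∈ Finset.univ.filter
        (fun l : Fin (N + 1) → Bool => l i.succ = true ∧ l j.succ = true),
        (1 / Z) * Real.exp (α₀ * ind (l 0) + α * (∑ k : Fin N, ind (l k.succ))
          + β * ind (l 0) * (∑ k : Fin N, ind (l k.succ))))
    (hρij : ρij = (ELiLj - p ^ 2) / (p * (1 - p)))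
    (hρ : ρ = (q - p ^ 2) / (p * (1 - p))) :
    ρij = ρ ^ 2 := by
  have hp : 0 < p := hq0.trans hqp
  have h1p : 0 < 1 - p := by linarith
  have hmixture : ELiLj = (1 - p) * sigmoid α ^ 2 + p * sigmoid (α + β) ^ 2 := by
    rw [hE, ← mul_sum, sum_dandelion_weight_both_true hij, hZ, one_div_mul_eq_div]
    exact mul_add_mul_div_add_eq_of_odds (by positivity) h1p.ne'
      (dandelion_central_odds N hq0 hqp hpos hα hα₀ hβ)
  rw [hρij, hρ, hmixture, sigmoid_dandelion_alpha hqp hpos hα,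
    sigmoid_dandelion_alpha_add_beta hq0 hqp hβ]
  field_simp
  ring

/-- In the Dandelion model, for distinct non-central indices `i, j` the correlation
`ρ_{ij} = (E[LᵢLⱼ] - p²)/(p(1-p))` between two non-central nodes equals the square
of the central–non-central correlation `ρ = (q - p²)/(p(1-p))`. -/
theorem dandelion_noncentral_correlation_sq (N : ℕ) (hN : 2 ≤ N) (p q : ℝ)
    (hp0 : 0 < p) (hp1 : p < 1) (hq0 : 0 < q) (hqp : q < p)
    (hpos : 1 - 2 * p + q > 0)
    (α α₀ β Z : ℝ)
    (hα : α = Real.log ((p - q) / (1 - 2 * p + q)))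
    (hα₀ : α₀ = (N - 1 : ℝ) * Real.log ((1 - p) / p) + N * α)
    (hβ : β = Real.log (q / (p - q)) - α)
    (hZ : Z = (1 + Real.exp α) ^ N + Real.exp α₀ * (1 + Real.exp (α + β)) ^ N)
    (i j : Fin N) (hij : i ≠ j)
    (ELiLj ρij ρ : ℝ)
    (hE : ELiLj = ∑ l ∈ Finset.univ.filter
        (fun l : Fin (N + 1) → Bool => l i.succ = true ∧ l j.succ = true),
        (1 / Z) * Real.exp (α₀ * ind (l 0) + α * (∑ k : Fin N, ind (l k.succ))
          + β * ind (l 0) * (∑ k : Fin N, ind (l k.succ))))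
    (hρij : ρij = (ELiLj - p ^ 2) / (p * (1 - p)))
    (hρ : ρ = (q - p ^ 2) / (p * (1 - p))) :
    ρij = ρ ^ 2 :=
  dandelion_noncentral_correlation_sq_general N p q hq0 hqp hpos α α₀ β Z hα hα₀ hβ hZ i j hij ELiLj
    ρij ρ hE hρij hρ
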